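/- arXiv:2411.15864 — 2 statements merged into one kernel-verified Lean document; each statement's English description precedes it below -/
import Mathlib

section
/- The complement in ℝ² of the union of m distinct lines has at most (m² + m + 2)/2 connected components. -/
/-!
Sort the points off the lines by the signs of the affine functions `p ↦ ⟪p, uᵢ⟫ - cᵢ`. A sign
cell is an intersection of open half-planes, hence convex, hence inside a single component; so
there are at most as many components as sign patterns that are realised.

In a space of dimension `d`, `n` affine functions realise at most `∑_{k ≤ d} C(n, k)` patterns,
by induction on `n`. Forgetting the first function at most doubles a pattern, and a pattern is
doubled only if the first function changes sign on its (convex) cell, i.e. vanishes at a point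
of it; so the doubled patterns are realised by the remaining functions restricted to the
hyperplane where the first one vanishes, a translate of a space of dimension `d - 1`. Pascal's
rule closes the induction, and for `d = 2` the bound is `1 + m + C(m, 2) = (m² + m + 2) / 2`.
-/

open scoped RealInnerProductSpace

/-- A line in the plane: `{p | ⟪p, u⟫ = c}` for some nonzero `u` and real `c`. -/
def IsLine (L : Set (EuclideanSpace ℝ (Fin 2))) : Prop :=
  ∃ u : EuclideanSpace ℝ (Fin 2), u ≠ 0 ∧ ∃ c : ℝ, L = {p | ⟪p, u⟫ = c}

open Set Module Matrix

theorem Nat.sum_range_choose_add_one (n d : ℕ) :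
    ∑ k ∈ Finset.range (d + 1), (n + 1).choose k =
      ∑ k ∈ Finset.range (d + 1), n.choose k + ∑ k ∈ Finset.range d, n.choose k := by
  induction d with
  | zero => simp
  | succ d ih =>
    rw [Finset.sum_range_succ, ih, Nat.choose_succ_succ', Finset.sum_range_succ _ (d + 1),
      Finset.sum_range_succ _ d]
    ring

theorem Nat.sum_range_three_choose (m : ℕ) :
    ∑ k ∈ Finset.range 3, m.choose k = (m ^ 2 + m + 2) / 2 := by
  have h : 2 * ∑ k ∈ Finset.range 3, m.choose k = m ^ 2 + m + 2 := by
    induction m with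
    | zero => simp [Finset.sum_range_succ]
    | succ m ih =>
      have h2 : (m + 1).choose 2 = m + m.choose 2 := by
        rw [Nat.choose_succ_succ', Nat.choose_one_right]
      simp only [Finset.sum_range_succ, Nat.choose_zero_right, Nat.choose_one_right, h2] at ih ⊢
      linear_combination ih
  omega

theorem ncard_le_ncard_image_vecTail_add {n : ℕ} (S : Set (Fin (n + 1) → Bool)) :
    S.ncard ≤ (vecTail '' S).ncard + {τ | vecCons false τ ∈ S ∧ vecCons true τ ∈ S}.ncard := by
  let A := {τ | vecCons false τ ∈ S}
  let B := {τ | vecCons true τ ∈ S}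
  have hsplit (σ : Fin (n + 1) → Bool) : ∃ b τ, σ = vecCons b τ :=
    ⟨_, _, (cons_head_tail σ).symm⟩
  have hcons (b : Bool) : Function.Injective (vecCons (n := n) b) :=
    fun _ _ h => (vecCons_inj.1 h).2
  have hS : S ⊆ vecCons false '' A ∪ vecCons true '' B := by
    intro σ hσ
    obtain ⟨b, τ, rfl⟩ := hsplit σ
    cases b
    exacts [.inl ⟨τ, hσ, rfl⟩, .inr ⟨τ, hσ, rfl⟩]
  have hAB : A ∪ B = vecTail '' S := by
    ext τ
    refine ⟨?_, ?_⟩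
    · rintro (h | h) <;> exact ⟨_, h, tail_cons _ _⟩
    · rintro ⟨σ, hσ, rfl⟩
      obtain ⟨b, τ, rfl⟩ := hsplit σ
      rw [tail_cons]
      cases b
      exacts [.inl hσ, .inr hσ]
  calc S.ncard ≤ (vecCons false '' A).ncard + (vecCons true '' B).ncard :=
        (ncard_le_ncard hS).trans (ncard_union_le _ _)
    _ = A.ncard + B.ncard := by
        rw [ncard_image_of_injective _ (hcons _), ncard_image_of_injective _ (hcons _)]
    _ = (A ∪ B).ncard + (A ∩ B).ncard := (ncard_union_add_ncard_inter _ _).symm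
    _ = _ := by rw [hAB]; rfl

theorem exists_surjective_connectedComponents_iUnion {X ι : Type*} [TopologicalSpace X]
    (s : ι → Set X) (hs : ∀ i, IsPreconnected (s i)) :
    ∃ g : {i // (s i).Nonempty} → ConnectedComponents (⋃ i, s i), Function.Surjective g := by
  have hcomp (i : ι) {x y : ⋃ i, s i} (hx : x.1 ∈ s i) (hy : y.1 ∈ s i) :
      ConnectedComponents.mk x = ConnectedComponents.mk y := by
    have : IsPreconnected (((↑) : (⋃ i, s i) → X) ⁻¹' s i) := by
      rw [← Topology.IsInducing.subtypeVal.isPreconnected_image, Subtype.image_preimage_coe,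
        inter_eq_right.2 (subset_iUnion s i)]
      exact hs i
    rw [ConnectedComponents.coe_eq_coe]
    exact connectedComponent_eq (this.subset_connectedComponent hx hy)
  refine ⟨fun i => ConnectedComponents.mk ⟨i.2.some, subset_iUnion s i.1 i.2.some_mem⟩, ?_⟩
  intro c
  obtain ⟨⟨x, hx⟩, rfl⟩ := ConnectedComponents.surjective_coe c
  obtain ⟨i, hxi⟩ := mem_iUnion.1 hx
  exact ⟨⟨i, x, hxi⟩, hcomp i (Nonempty.some_mem _) (y := ⟨x, hx⟩) hxi⟩

section AffineMap

variable {k V W : Type*} [Ring k] [AddCommGroup V] [Module k V] [AddCommGroup W] [Module k W]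

theorem AffineMap.linear_ne_zero_of_apply_ne (h : V →ᵃ[k] W) {p q : V} (hpq : h p ≠ h q) :
    h.linear ≠ 0 := by
  intro h0
  apply hpq
  rw [← vsub_eq_zero_iff_eq, ← h.linearMap_vsub, h0, LinearMap.zero_apply]

theorem AffineMap.exists_range_eq_preimage_zero (h : V →ᵃ[k] W) {r₀ : V} (hr₀ : h r₀ = 0) :
    ∃ φ : LinearMap.ker h.linear →ᵃ[k] V, range φ = h ⁻¹' {0} := by
  refine ⟨(AffineEquiv.vaddConst k r₀).toAffineMap.comp
    (LinearMap.ker h.linear).subtype.toAffineMap, Subset.antisymm ?_ fun r hr => ?_⟩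
  · rintro _ ⟨v, rfl⟩
    show h (v.1 +ᵥ r₀) = 0
    rw [h.map_vadd, hr₀, LinearMap.mem_ker.1 v.2, vadd_eq_add, add_zero]
  · refine ⟨⟨r - r₀, ?_⟩, sub_add_cancel r r₀⟩
    rw [LinearMap.mem_ker, ← vsub_eq_sub, h.linearMap_vsub, mem_singleton_iff.1 hr, hr₀,
      vsub_self]

end AffineMap

section SignCell

variable {E : Type*} [AddCommGroup E] [Module ℝ E] {ι : Type*}

theorem Convex.exists_mem_affineMap_eq_zero {C : Set E} (hC : Convex ℝ C) (h : E →ᵃ[ℝ] ℝ)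
    {p q : E} (hp : p ∈ C) (hq : q ∈ C) (hhp : h p < 0) (hhq : 0 < h q) : ∃ r ∈ C, h r = 0 :=
  (hC.affine_image h).ordConnected.out (mem_image_of_mem h hp) (mem_image_of_mem h hq)
    ⟨hhp.le, hhq.le⟩

def signCell (f : ι → E →ᵃ[ℝ] ℝ) (σ : ι → Bool) : Set E :=
  ⋂ i, f i ⁻¹' (if σ i then Ioi 0 else Iio 0)

theorem convex_signCell (f : ι → E →ᵃ[ℝ] ℝ) (σ : ι → Bool) : Convex ℝ (signCell f σ) :=
  convex_iInter fun i => by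
    split_ifs
    · exact (convex_Ioi 0).affine_preimage (f i)
    · exact (convex_Iio 0).affine_preimage (f i)

theorem iUnion_signCell (f : ι → E →ᵃ[ℝ] ℝ) : ⋃ σ, signCell f σ = {p | ∀ i, f i p ≠ 0} := by
  ext p
  refine ⟨fun hp i => ?_, fun hp => mem_iUnion.2 ⟨fun i => decide (0 < f i p), ?_⟩⟩
  · obtain ⟨σ, hσ⟩ := mem_iUnion.1 hp
    have := mem_iInter.1 hσ i
    split_ifs at this
    exacts [(this : 0 < f i p).ne', (this : f i p < 0).ne]
  · refine mem_iInter.2 fun i => ?_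
    rcases (hp i).lt_or_gt with hi | hi
    · simpa [hi.not_gt] using hi
    · simp [hi]

theorem signCell_vecCons {n : ℕ} (f : Fin (n + 1) → E →ᵃ[ℝ] ℝ) (b : Bool) (τ : Fin n → Bool) :
    signCell f (vecCons b τ) =
      f 0 ⁻¹' (if b then Ioi 0 else Iio 0) ∩ signCell (vecTail f) τ := by
  ext p
  simp only [signCell, mem_iInter, mem_inter_iff, Fin.forall_fin_succ]
  rfl

theorem signCell_comp {F : Type*} [AddCommGroup F] [Module ℝ F] (f : ι → E →ᵃ[ℝ] ℝ)
    (φ : F →ᵃ[ℝ] E) (σ : ι → Bool) :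
    signCell (fun i => (f i).comp φ) σ = φ ⁻¹' signCell f σ := by
  ext p
  simp [signCell]

theorem exists_mem_signCell_vecTail_eq_zero {n : ℕ} {f : Fin (n + 1) → E →ᵃ[ℝ] ℝ}
    {τ : Fin n → Bool} (hneg : (signCell f (vecCons false τ)).Nonempty)
    (hpos : (signCell f (vecCons true τ)).Nonempty) :
    ∃ r ∈ signCell (vecTail f) τ, f 0 r = 0 := by
  obtain ⟨p, hp⟩ := hneg
  obtain ⟨q, hq⟩ := hpos
  rw [signCell_vecCons] at hp hq
  exact (convex_signCell _ τ).exists_mem_affineMap_eq_zero (f 0) hp.2 hq.2 hp.1 hq.1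

theorem ncard_setOf_signCell_nonempty_le [FiniteDimensional ℝ E] {n : ℕ}
    (f : Fin n → E →ᵃ[ℝ] ℝ) :
    {σ | (signCell f σ).Nonempty}.ncard ≤ ∑ k ∈ Finset.range (finrank ℝ E + 1), n.choose k := by
  induction n generalizing E with
  | zero => exact (ncard_le_one_of_subsingleton _).trans_eq (by simp [Finset.sum_range_succ'])
  | succ n ih =>
    set S := {σ | (signCell f σ).Nonempty}
    have hres : vecTail '' S ⊆ {τ | (signCell (vecTail f) τ).Nonempty} := by
      rintro _ ⟨σ, ⟨p, hp⟩, rfl⟩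
      rw [← cons_head_tail σ, signCell_vecCons] at hp
      exact ⟨p, hp.2⟩
    have hcut : {τ | vecCons false τ ∈ S ∧ vecCons true τ ∈ S}.ncard ≤
        ∑ k ∈ Finset.range (finrank ℝ E), n.choose k := by
      rcases eq_empty_or_nonempty {τ | vecCons false τ ∈ S ∧ vecCons true τ ∈ S} with
        hC | ⟨τ₀, ⟨p, hp⟩, ⟨q, hq⟩⟩
      · simp [hC]
      rw [signCell_vecCons] at hp hq
      obtain ⟨r₀, -, hr₀⟩ :=
        convex_univ.exists_mem_affineMap_eq_zero (f 0) (mem_univ p) (mem_univ q) hp.1 hq.1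
      have hlin := (f 0).linear_ne_zero_of_apply_ne (hp.1.trans hq.1 : f 0 p < f 0 q).ne
      obtain ⟨φ, hφ⟩ := (f 0).exists_range_eq_preimage_zero hr₀
      rw [← Module.Dual.finrank_ker_add_one_of_ne_zero hlin]
      refine (ncard_le_ncard fun τ hτ => ?_).trans (ih fun j => (vecTail f j).comp φ)
      obtain ⟨r, hr, hr0⟩ := exists_mem_signCell_vecTail_eq_zero hτ.1 hτ.2
      obtain ⟨v, rfl⟩ := hφ.ge hr0
      exact ⟨v, by rwa [signCell_comp]⟩
    calc S.ncard ≤ (vecTail '' S).ncard + {τ | vecCons false τ ∈ S ∧ vecCons true τ ∈ S}.ncard :=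
          ncard_le_ncard_image_vecTail_add S
      _ ≤ _ := add_le_add ((ncard_le_ncard hres).trans (ih _)) hcut
      _ = _ := (Nat.sum_range_choose_add_one n _).symm

end SignCell

theorem components_of_line_complement_le_general (m : ℕ)
    (L : Fin m → Set (EuclideanSpace ℝ (Fin 2)))
    (hL : ∀ i, IsLine (L i)) :
    Finite (ConnectedComponents ↥((⋃ i, L i)ᶜ)) ∧
      Nat.card (ConnectedComponents ↥((⋃ i, L i)ᶜ)) ≤ (m ^ 2 + m + 2) / 2 := by
  choose u _ c hLc using hL
  let f : Fin m → EuclideanSpace ℝ (Fin 2) →ᵃ[ℝ] ℝ := fun i =>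
    (innerₛₗ ℝ (u i)).toAffineMap - AffineMap.const ℝ _ (c i)
  have hU : (⋃ i, L i)ᶜ = ⋃ σ, signCell f σ := by
    ext p
    rw [iUnion_signCell]
    simp [hLc, f, real_inner_comm, sub_eq_zero]
  obtain ⟨g, hg⟩ := exists_surjective_connectedComponents_iUnion (signCell f) fun σ =>
    (convex_signCell f σ).isPreconnected
  rw [hU]
  refine ⟨.of_surjective g hg, (Nat.card_le_card_of_surjective g hg).trans ?_⟩
  calc Nat.card {σ // (signCell f σ).Nonempty} = {σ | (signCell f σ).Nonempty}.ncard :=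
        Nat.card_coe_set_eq _
    _ ≤ ∑ k ∈ Finset.range 3, m.choose k := by
        simpa [finrank_euclideanSpace] using ncard_setOf_signCell_nonempty_le f
    _ = (m ^ 2 + m + 2) / 2 := Nat.sum_range_three_choose m

/-- The complement in `ℝ²` of the union of `m` distinct lines has at most
`(m² + m + 2)/2` connected components. -/
theorem components_of_line_complement_le (m : ℕ)
    (L : Fin m → Set (EuclideanSpace ℝ (Fin 2)))
    (hL : ∀ i, IsLine (L i)) (hdist : Function.Injective L) :
    Finite (ConnectedComponents ↥((⋃ i, L i)ᶜ)) ∧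
      Nat.card (ConnectedComponents ↥((⋃ i, L i)ᶜ)) ≤ (m ^ 2 + m + 2) / 2 :=
  components_of_line_complement_le_general m L hL
end

section
/- Let G be a graph with minimum degree at least 2 and feedback edge set F of size k, and let C be the union of endpoints of F and the vertices of degree ≥ 3 in the forest T = (V(G), E(G)\F). Then |C| ≤ 4k, and the forest T decomposes into at most 4k edge-disjoint paths whose endpoints lie in C and whose internal vertices have degree 2 in T and lie outside C. -/
/-- The forest obtained from `G` by deleting a feedback edge set `F`. -/
def forestOf {V : Type*} (G : SimpleGraph V) (F : Finset (Sym2 V)) : SimpleGraph V :=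
  G.deleteEdges ↑F

/-- The set `C`: endpoints of feedback edges together with the vertices of degree at
least 3 in the forest. -/
def branchSet {V : Type*} (G : SimpleGraph V) (F : Finset (Sym2 V)) : Set V :=
  {v : V | ∃ e ∈ F, v ∈ e} ∪ {v : V | 3 ≤ ((forestOf G F).neighborSet v).ncard}

/-!
Let `w v` be the number of feedback edges at `v`, so that `deg_T v + w v ≥ 2` and `∑ w = 2k`.
A finite forest has at most as many edges as non-isolated vertices (delete leaves one at a
time), i.e. `∑ deg_T ≤ 2 · #{v | deg_T v > 0}`; adding suitable inequalities vertex by vertex to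
this gives `|C| ≤ 2 ∑ w` and `∑_{v ∈ C} deg_T v ≤ 4 ∑ w`.

Every vertex outside `C` has degree 2 in `T`. Extending any remaining edge at both ends until `C`
is reached gives a path, as acyclicity prevents the extension from running into itself. Deleting
that path keeps the degree of every vertex outside `C` even, and the path uses at least two of
the `∑_{v ∈ C} deg_T v ≤ 8k` edge ends at `C`, so at most `4k` paths arise.
-/

open Finset

namespace SimpleGraph

variable {V : Type*}

theorem ncard_neighborSet_eq_degree (G : SimpleGraph V) (v : V) [Fintype (G.neighborSet v)] :
    (G.neighborSet v).ncard = G.degree v := by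
  rw [← coe_neighborFinset, Set.ncard_coe_finset, card_neighborFinset_eq_degree]

theorem IsAcyclic.exists_degree_eq_one [Fintype V] {T : SimpleGraph V} [DecidableRel T.Adj]
    (hT : T.IsAcyclic) (h : T.edgeSet.Nonempty) : ∃ u, T.degree u = 1 := by
  obtain ⟨e, he⟩ := h
  induction e using Sym2.ind with | _ a b => ?_
  rw [mem_edgeSet] at he
  have : Nonempty V := ⟨a⟩
  obtain ⟨u, v, p, hp, hmax⟩ := Walk.exists_isPath_forall_isPath_length_le_length T
  have hnil : ¬p.Nil := fun hnil => by
    have := hmax _ _ (.cons he .nil) (Walk.IsPath.nil.cons (by simpa using he.ne))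
    simp only [Walk.length_cons, Walk.length_nil, hnil.length_eq_zero] at this
    omega
  refine ⟨u, degree_eq_one_iff_existsUnique_adj.2 ⟨_, p.adj_snd hnil, fun x hx => ?_⟩⟩
  refine hT.eq_snd_of_adj_start hp hx (not_not.1 fun hxp => ?_)
  simpa using hmax _ _ (.cons hx.symm p) (hp.cons hxp)

theorem IsAcyclic.card_edgeFinset_le_card_support [Fintype V] [DecidableEq V]
    {T : SimpleGraph V} [DecidableRel T.Adj] (hT : T.IsAcyclic) :
    #T.edgeFinset ≤ Fintype.card T.support := by
  rcases T.edgeFinset.eq_empty_or_nonempty with h | h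
  · simp [h]
  obtain ⟨u, hu⟩ := hT.exists_degree_eq_one (by simpa using h)
  have hu' : u ∈ T.support := (T.degree_pos_iff_mem_support u).1 (by omega)
  have hrec := IsAcyclic.card_edgeFinset_le_card_support (hT.anti (T.deleteIncidenceSet_le u))
  rw [card_edgeFinset_deleteIncidenceSet, hu] at hrec
  have hsupp := T.card_support_deleteIncidenceSet hu'
  have hpos : 0 < Fintype.card T.support := Fintype.card_pos_iff.2 ⟨⟨u, hu'⟩⟩
  omega
termination_by #T.edgeFinset
decreasing_by
  rw [card_edgeFinset_deleteIncidenceSet, hu]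
  exact Nat.sub_lt h.card_pos one_pos

theorem IsAcyclic.sum_degree_le [Fintype V] [DecidableEq V] {T : SimpleGraph V}
    [DecidableRel T.Adj] (hT : T.IsAcyclic) :
    ∑ v, T.degree v ≤ ∑ v, if 0 < T.degree v then 2 else 0 := by
  have h := hT.card_edgeFinset_le_card_support
  rw [Fintype.card_subtype, card_filter] at h
  have : ∑ v, (if 0 < T.degree v then 2 else 0) = 2 * ∑ v, if v ∈ T.support then 1 else 0 := by
    simp_rw [mul_sum, degree_pos_iff_mem_support, mul_ite, mul_one, mul_zero]
  rw [this, sum_degrees_eq_twice_card_edges]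
  omega

section Counting

variable [Fintype V] [DecidableEq V] {T : SimpleGraph V} [DecidableRel T.Adj]

theorem IsAcyclic.card_le_two_mul_sum (hT : T.IsAcyclic) (w : V → ℕ)
    (hw : ∀ v, 2 ≤ T.degree v + w v) (C : Finset V) (hC : ∀ v ∈ C, 0 < w v ∨ 3 ≤ T.degree v) :
    #C ≤ 2 * ∑ v, w v := by
  have key : ∀ v, (if v ∈ C then 1 else 0) + (if 0 < T.degree v then 2 else 0)
      ≤ 2 * w v + T.degree v := fun v => by
    have := hw v
    by_cases hv : v ∈ C
    · have := hC v hv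
      split_ifs <;> omega
    · split_ifs <;> omega
  have := sum_le_sum fun v (_ : v ∈ univ) => key v
  rw [sum_add_distrib, sum_add_distrib, ← mul_sum, sum_boole, Nat.cast_id, filter_univ_mem] at this
  have := hT.sum_degree_le
  omega

theorem IsAcyclic.sum_degree_le_four_mul_sum (hT : T.IsAcyclic) (w : V → ℕ)
    (hw : ∀ v, 2 ≤ T.degree v + w v) (C : Finset V) (hC : ∀ v ∈ C, 0 < w v ∨ 3 ≤ T.degree v) :
    ∑ v ∈ C, T.degree v ≤ 4 * ∑ v, w v := by
  have key : ∀ v, (if v ∈ C then T.degree v else 0) + 3 * (if 0 < T.degree v then 2 else 0)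
      ≤ 4 * w v + 3 * T.degree v := fun v => by
    have := hw v
    by_cases hv : v ∈ C
    · have := hC v hv
      split_ifs <;> omega
    · split_ifs <;> omega
  have := sum_le_sum fun v (_ : v ∈ univ) => key v
  rw [sum_add_distrib, sum_add_distrib, ← mul_sum, ← mul_sum, ← mul_sum, sum_ite_mem,
    univ_inter] at this
  have := hT.sum_degree_le
  omega

end Counting

def Walk.InternallyAvoids {G : SimpleGraph V} {u w : V} (q : G.Walk u w) (C : Set V) : Prop :=
  ∀ x ∈ q.support, x ≠ u → x ≠ w → x ∉ C

theorem Walk.InternallyAvoids.reverse {G : SimpleGraph V} {u w : V} {q : G.Walk u w}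
    {C : Set V} (h : q.InternallyAvoids C) : q.reverse.InternallyAvoids C :=
  fun x hx hxw hxu => h x (by simpa using hx) hxu hxw

section IsPathDecomposition

variable {T : SimpleGraph V} {C : Set V}

structure IsPathDecomposition (C : Set V) (s : Set (Sym2 V)) {n : ℕ}
    (p : Fin n → Σ u : V, Σ w : V, T.Walk u w) : Prop where
  isPath i : (p i).2.2.IsPath
  mem_ends i : (p i).1 ∈ C ∧ (p i).2.1 ∈ C
  internallyAvoids i : (p i).2.2.InternallyAvoids C
  disjoint : ∀ i j, i ≠ j → ∀ e ∈ (p i).2.2.edges, e ∉ (p j).2.2.edges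
  mem_iff e : e ∈ s ↔ ∃ i, e ∈ (p i).2.2.edges

theorem isPathDecomposition_empty (C : Set V) :
    IsPathDecomposition C ∅ (Fin.elim0 : Fin 0 → Σ u : V, Σ w : V, T.Walk u w) where
  isPath i := i.elim0
  mem_ends i := i.elim0
  internallyAvoids i := i.elim0
  disjoint i := i.elim0
  mem_iff := by simp

theorem IsPathDecomposition.cons {s : Set (Sym2 V)} {u w : V} {q : T.Walk u w} {n : ℕ}
    {p : Fin n → Σ u : V, Σ w : V, T.Walk u w}
    (hp : IsPathDecomposition C (s \ {e | e ∈ q.edges}) p) (hq : q.IsPath) (hu : u ∈ C)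
    (hw : w ∈ C) (hqC : q.InternallyAvoids C) (hqs : ∀ e ∈ q.edges, e ∈ s) :
    IsPathDecomposition C s (Fin.cons ⟨u, w, q⟩ p) where
  isPath i := Fin.cases hq hp.isPath i
  mem_ends i := Fin.cases ⟨hu, hw⟩ hp.mem_ends i
  internallyAvoids i := Fin.cases hqC hp.internallyAvoids i
  disjoint i j hij e he := by
    rcases Fin.eq_zero_or_eq_succ i with rfl | ⟨i, rfl⟩ <;>
      rcases Fin.eq_zero_or_eq_succ j with rfl | ⟨j, rfl⟩
    · exact absurd rfl hij
    · exact fun he' => ((hp.mem_iff e).2 ⟨j, he'⟩).2 he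
    · exact fun he' => ((hp.mem_iff e).2 ⟨i, he⟩).2 he'
    · exact hp.disjoint i j (fun h => hij (congrArg Fin.succ h)) e he
  mem_iff e := by
    rw [Fin.exists_fin_succ]
    change e ∈ s ↔ e ∈ q.edges ∨ ∃ i, e ∈ (p i).2.2.edges
    rw [← hp.mem_iff]
    have := hqs e
    exact ⟨fun hes => or_iff_not_imp_left.2 fun he => ⟨hes, he⟩,
      fun h => h.elim this And.left⟩

end IsPathDecomposition

section EdgeDegree

variable [DecidableEq V]

def edgeDegree (s : Finset (Sym2 V)) (v : V) : ℕ := #{e ∈ s | v ∈ e}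

theorem edgeDegree_sdiff_add {s t : Finset (Sym2 V)} (h : t ⊆ s) (v : V) :
    edgeDegree (s \ t) v + edgeDegree t v = edgeDegree s v := by
  unfold edgeDegree
  rw [← card_union_of_disjoint (disjoint_filter_filter sdiff_disjoint), ← filter_union,
    sdiff_union_of_subset h]

theorem edgeDegree_edgeFinset [Fintype V] (T : SimpleGraph V) [DecidableRel T.Adj] (v : V) :
    edgeDegree T.edgeFinset v = T.degree v := by
  rw [edgeDegree, ← incidenceFinset_eq_filter, card_incidenceFinset_eq_degree]

theorem exists_mk_mem_ne_of_edgeDegree_ne_one {s : Finset (Sym2 V)} {u v : V}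
    (hu : edgeDegree s u ≠ 1) (h : s(u, v) ∈ s) : ∃ x ≠ v, s(u, x) ∈ s := by
  have : 1 < edgeDegree s u :=
    lt_of_le_of_ne (card_pos.2 ⟨_, mem_filter.2 ⟨h, Sym2.mem_mk_left u v⟩⟩) hu.symm
  obtain ⟨e, he, hne⟩ := exists_mem_ne this s(u, v)
  obtain ⟨hes, hue⟩ := mem_filter.1 he
  obtain ⟨x, rfl⟩ := Sym2.mem_iff_exists.1 hue
  exact ⟨x, fun hxv => hne (hxv ▸ rfl), hes⟩

theorem Walk.IsPath.even_edgeDegree_edges_iff {G : SimpleGraph V} {u w : V} {q : G.Walk u w}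
    (hq : q.IsPath) (huw : u ≠ w) (v : V) :
    Even (edgeDegree q.edges.toFinset v) ↔ v ≠ u ∧ v ≠ w := by
  rw [edgeDegree, hq.edges_nodup.card_eq_countP, hq.isTrail.even_countP_edges_iff]
  exact ⟨fun h => h huw, fun h _ => h⟩

theorem Walk.IsPath.two_le_sum_edgeDegree_edges {G : SimpleGraph V} {u w : V} {q : G.Walk u w}
    (hq : q.IsPath) (huw : u ≠ w) {C : Finset V} (hu : u ∈ C) (hw : w ∈ C) :
    2 ≤ ∑ v ∈ C, edgeDegree q.edges.toFinset v := by
  have hend : ∀ x ∈ ({u, w} : Finset V), 1 ≤ edgeDegree q.edges.toFinset x := fun x hx =>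
    (Nat.not_even_iff_odd.1 <| (hq.even_edgeDegree_edges_iff huw x).not.2 <| by
      simp only [mem_insert, mem_singleton] at hx; tauto).pos
  calc 2 ≤ ∑ v ∈ {u, w}, edgeDegree q.edges.toFinset v := by
        rw [sum_pair huw]; have := hend u (by simp); have := hend w (by simp); omega
    _ ≤ _ := sum_le_sum_of_subset (insert_subset hu (singleton_subset_iff.2 hw))

theorem ncard_neighborSet_le_deleteEdges_add_edgeDegree [Finite V]
    (G : SimpleGraph V) (F : Finset (Sym2 V)) (v : V) :
    (G.neighborSet v).ncard ≤ ((G.deleteEdges F).neighborSet v).ncard + edgeDegree F v := by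
  have hsub : G.neighborSet v ⊆ (G.deleteEdges F).neighborSet v ∪ {x | s(v, x) ∈ F} :=
    fun x hx => by
      by_cases h : s(v, x) ∈ F
      · exact Or.inr h
      · exact Or.inl (deleteEdges_adj.2 ⟨hx, h⟩)
  have hF : {x | s(v, x) ∈ F}.ncard ≤ edgeDegree F v := by
    rw [edgeDegree, ← Set.ncard_coe_finset]
    exact Set.ncard_le_ncard_of_injOn (fun x => s(v, x)) (fun x hx => by simpa using hx)
      fun x _ y _ h => Sym2.congr_right.1 h
  calc _ ≤ _ := Set.ncard_le_ncard hsub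
    _ ≤ _ := Set.ncard_union_le _ _
    _ ≤ _ := by omega

theorem sum_edgeDegree [Fintype V] {F : Finset (Sym2 V)}
    (hF : ∀ e ∈ F, ¬e.IsDiag) : ∑ v, edgeDegree F v = 2 * #F := by
  simp_rw [edgeDegree, card_filter]
  rw [sum_comm, mul_comm, ← smul_eq_mul, ← sum_const]
  refine sum_congr rfl fun e he => ?_
  rw [← card_filter, ← Sym2.card_toFinset_of_not_isDiag e (hF e he)]
  congr 1
  ext
  simp

end EdgeDegree

section PathDecomposition

variable [DecidableEq V] [Fintype V] {T : SimpleGraph V} {C : Set V} {s : Finset (Sym2 V)}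

theorem IsAcyclic.exists_extend_start (hT : T.IsAcyclic) (hs : ∀ e ∈ s, e ∈ T.edgeSet)
    (hC : ∀ v ∉ C, edgeDegree s v ≠ 1) {u w : V} (q : T.Walk u w) (hq : q.IsPath)
    (hqs : ∀ e ∈ q.edges, e ∈ s) (hqC : q.InternallyAvoids C) {e : Sym2 V} (he : e ∈ q.edges) :
    ∃ (u' : V) (q' : T.Walk u' w), q'.IsPath ∧ u' ∈ C ∧ (∀ e ∈ q'.edges, e ∈ s) ∧
      q'.InternallyAvoids C ∧ e ∈ q'.edges := by
  by_cases hu : u ∈ C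
  · exact ⟨u, q, hq, hu, hqs, hqC, he⟩
  have hnil : ¬q.Nil := fun h => by cases h; simp at he
  obtain ⟨x, hxv, hxs⟩ :=
    exists_mk_mem_ne_of_edgeDegree_ne_one (hC u hu) (hqs _ (Walk.mk_start_snd_mem_edges hnil))
  have hux : T.Adj u x := hs _ hxs
  have hx : x ∉ q.support := fun hx => hxv (hT.eq_snd_of_adj_start hq hux hx)
  have hq' : (q.cons hux.symm).IsPath := hq.cons hx
  have hdec : Fintype.card V - (q.cons hux.symm).length < Fintype.card V - q.length := by
    have := hq'.length_lt
    rw [Walk.length_cons] at this ⊢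
    omega
  refine hT.exists_extend_start hs hC (q.cons hux.symm) hq' ?_ ?_
    (List.mem_cons_of_mem _ he)
  · intro e he
    rw [Walk.edges_cons, List.mem_cons] at he
    rcases he with rfl | he
    exacts [Sym2.eq_swap ▸ hxs, hqs e he]
  · intro y hy hyx hyw
    obtain rfl | hy := List.mem_cons.1 (Walk.support_cons _ _ ▸ hy)
    · exact absurd rfl hyx
    by_cases hyu : y = u
    · exact hyu ▸ hu
    · exact hqC y hy hyu hyw
termination_by Fintype.card V - q.length
decreasing_by exact hdec

theorem IsAcyclic.exists_isPath_mem_edges (hT : T.IsAcyclic) (hs : ∀ e ∈ s, e ∈ T.edgeSet)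
    (hC : ∀ v ∉ C, edgeDegree s v ≠ 1) {e : Sym2 V} (he : e ∈ s) :
    ∃ (u w : V) (q : T.Walk u w), q.IsPath ∧ u ∈ C ∧ w ∈ C ∧ q.InternallyAvoids C ∧
      (∀ e ∈ q.edges, e ∈ s) ∧ e ∈ q.edges := by
  induction e using Sym2.ind with | _ a b => ?_
  have hab : T.Adj a b := hs _ he
  obtain ⟨u, q₁, hq₁, hu, hq₁s, hq₁C, he₁⟩ := hT.exists_extend_start hs hC (.cons hab .nil)
    (by simp [hab.ne]) (by simpa) (fun x hx hxa hxb => by simp_all) (e := s(a, b)) (by simp)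
  obtain ⟨w, q₂, hq₂, hw, hq₂s, hq₂C, he₂⟩ := hT.exists_extend_start hs hC q₁.reverse
    hq₁.reverse (by simpa) hq₁C.reverse (by simpa)
  exact ⟨w, u, q₂, hq₂, hw, hu, hq₂C, hq₂s, he₂⟩

theorem IsAcyclic.exists_isPathDecomposition (hT : T.IsAcyclic) (C : Set V) [Fintype C]
    (s : Finset (Sym2 V)) (hs : ∀ e ∈ s, e ∈ T.edgeSet) (heven : ∀ v ∉ C, Even (edgeDegree s v)) :
    ∃ (n : ℕ) (p : Fin n → Σ u : V, Σ w : V, T.Walk u w),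
      IsPathDecomposition C s p ∧ 2 * n ≤ ∑ v ∈ C.toFinset, edgeDegree s v := by
  rcases s.eq_empty_or_nonempty with rfl | ⟨e, he⟩
  · exact ⟨0, Fin.elim0, by simpa using isPathDecomposition_empty C, by simp⟩
  have hC : ∀ v ∉ C, edgeDegree s v ≠ 1 := fun v hv h => by simpa [h] using heven v hv
  obtain ⟨u, w, q, hq, hu, hw, hqC, hqs, heq⟩ := hT.exists_isPath_mem_edges hs hC he
  have huw : u ≠ w := fun h => by
    cases hq.nil_iff_eq.2 h
    simp at heq
  set E := q.edges.toFinset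
  have hE : E ⊆ s := fun e he => hqs e (List.mem_toFinset.1 he)
  have hdec : #(s \ E) < #s := card_lt_card (sdiff_ssubset hE ⟨e, List.mem_toFinset.2 heq⟩)
  obtain ⟨n, p, hp, hn⟩ := hT.exists_isPathDecomposition C (s \ E)
    (fun e he => hs e (mem_sdiff.1 he).1) fun v hv => by
      have hqv := (hq.even_edgeDegree_edges_iff huw v).2
        ⟨fun h => hv (h ▸ hu), fun h => hv (h ▸ hw)⟩
      have := heven v hv
      rw [← edgeDegree_sdiff_add hE] at this
      exact (Nat.even_add.1 this).2 hqv
  have hp' : IsPathDecomposition C (↑s \ {e | e ∈ q.edges}) p := by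
    rwa [← List.coe_toFinset, ← coe_sdiff]
  refine ⟨n + 1, Fin.cons ⟨u, w, q⟩ p, hp'.cons hq hu hw hqC hqs, ?_⟩
  have : 2 ≤ ∑ v ∈ C.toFinset, edgeDegree E v :=
    hq.two_le_sum_edgeDegree_edges huw (Set.mem_toFinset.2 hu) (Set.mem_toFinset.2 hw)
  calc 2 * (n + 1)
      ≤ ∑ v ∈ C.toFinset, edgeDegree (s \ E) v + ∑ v ∈ C.toFinset, edgeDegree E v := by omega
    _ = ∑ v ∈ C.toFinset, edgeDegree s v := by
      rw [← sum_add_distrib]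
      simp only [edgeDegree_sdiff_add hE]
termination_by #s

end PathDecomposition

end SimpleGraph

open SimpleGraph

theorem mem_branchSet_iff {V : Type*} [Fintype V] [DecidableEq V] {G : SimpleGraph V}
    {F : Finset (Sym2 V)} [DecidableRel (forestOf G F).Adj] {v : V} :
    v ∈ branchSet G F ↔ 0 < edgeDegree F v ∨ 3 ≤ (forestOf G F).degree v := by
  simp only [branchSet, Set.mem_union, Set.mem_ofPred_eq, ncard_neighborSet_eq_degree, edgeDegree,
    card_pos, filter_nonempty_iff]

theorem forest_decomposes_into_paths_general {V : Type*} [Fintype V]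
    (G : SimpleGraph V) (F : Finset (Sym2 V)) (k : ℕ)
    (hmin : ∀ v : V, 2 ≤ (G.neighborSet v).ncard)
    (hF : ↑F ⊆ G.edgeSet) (hk : F.card = k)
    (hacyc : (forestOf G F).IsAcyclic) :
    (branchSet G F).ncard ≤ 4 * k ∧
    ∃ n : ℕ, n ≤ 4 * k ∧
      ∃ p : Fin n → Σ u : V, Σ w : V, (forestOf G F).Walk u w,
        (∀ i, (p i).2.2.IsPath) ∧
        (∀ i, (p i).1 ∈ branchSet G F ∧ (p i).2.1 ∈ branchSet G F) ∧
        (∀ i, ∀ x ∈ (p i).2.2.support, x ≠ (p i).1 → x ≠ (p i).2.1 →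
          x ∉ branchSet G F ∧ ((forestOf G F).neighborSet x).ncard = 2) ∧
        (∀ i j, i ≠ j → ∀ e, e ∈ (p i).2.2.edges → e ∉ (p j).2.2.edges) ∧
        (∀ e : Sym2 V, e ∈ (forestOf G F).edgeSet ↔ ∃ i, e ∈ (p i).2.2.edges) := by
  classical
  have hdeg v : 2 ≤ (forestOf G F).degree v + edgeDegree F v := by
    rw [← ncard_neighborSet_eq_degree]
    exact (hmin v).trans (G.ncard_neighborSet_le_deleteEdges_add_edgeDegree F v)
  have hdeg₂ v (hv : v ∉ branchSet G F) : (forestOf G F).degree v = 2 := by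
    rw [mem_branchSet_iff] at hv
    have := hdeg v
    omega
  have hsum : ∑ v, edgeDegree F v = 2 * k :=
    hk ▸ sum_edgeDegree fun e he => G.not_isDiag_of_mem_edgeSet (hF he)
  have hC : ∀ v ∈ (branchSet G F).toFinset, 0 < edgeDegree F v ∨ 3 ≤ (forestOf G F).degree v :=
    fun v hv => mem_branchSet_iff.1 (Set.mem_toFinset.1 hv)
  have hcard := hacyc.card_le_two_mul_sum _ hdeg _ hC
  have hdegC := hacyc.sum_degree_le_four_mul_sum _ hdeg _ hC
  obtain ⟨n, p, hp, hn⟩ := hacyc.exists_isPathDecomposition (branchSet G F)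
    (forestOf G F).edgeFinset (fun e => mem_edgeFinset.1) fun v hv => by
      rw [edgeDegree_edgeFinset, hdeg₂ v hv]
      exact even_two
  simp only [edgeDegree_edgeFinset] at hn
  refine ⟨by rw [Set.ncard_eq_toFinset_card']; omega, n, by omega, p, hp.isPath, hp.mem_ends,
    fun i x hx hxu hxw => ?_, hp.disjoint, fun e => by simpa using hp.mem_iff e⟩
  have hxC := hp.internallyAvoids i x hx hxu hxw
  exact ⟨hxC, by rw [ncard_neighborSet_eq_degree, hdeg₂ x hxC]⟩

/-- If `G` has minimum degree at least 2 and feedback edge set `F` of size `k`, then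
`|C| ≤ 4k` and the forest `T = (V, E(G) \ F)` decomposes into at most `4k`
edge-disjoint paths with endpoints in `C` whose internal vertices have degree 2 in
`T` and lie outside `C`. -/
theorem forest_decomposes_into_paths {V : Type*} [Fintype V] [DecidableEq V]
    (G : SimpleGraph V) (F : Finset (Sym2 V)) (k : ℕ)
    (hmin : ∀ v : V, 2 ≤ (G.neighborSet v).ncard)
    (hF : ↑F ⊆ G.edgeSet) (hk : F.card = k)
    (hacyc : (forestOf G F).IsAcyclic) :
    (branchSet G F).ncard ≤ 4 * k ∧
    ∃ n : ℕ, n ≤ 4 * k ∧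
      ∃ p : Fin n → Σ u : V, Σ w : V, (forestOf G F).Walk u w,
        (∀ i, (p i).2.2.IsPath) ∧
        (∀ i, (p i).1 ∈ branchSet G F ∧ (p i).2.1 ∈ branchSet G F) ∧
        (∀ i, ∀ x ∈ (p i).2.2.support, x ≠ (p i).1 → x ≠ (p i).2.1 →
          x ∉ branchSet G F ∧ ((forestOf G F).neighborSet x).ncard = 2) ∧
        (∀ i j, i ≠ j → ∀ e, e ∈ (p i).2.2.edges → e ∉ (p j).2.2.edges) ∧
        (∀ e : Sym2 V, e ∈ (forestOf G F).edgeSet ↔ ∃ i, e ∈ (p i).2.2.edges) :=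
  forest_decomposes_into_paths_general G F k hmin hF hk hacyc
end
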